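/- arXiv:1008.4059 — 2 statements merged into one kernel-verified Lean document; each statement's English description precedes it below -/
import Mathlib

section
/- Let X be a random variable with the Gamma(α,1) distribution, α > 0. Then for all t > 0 and s ≥ 0, E[ e^{−sX − tX²} ] = ( 2 t^{α/2} Γ(α) )^{-1} · Σ_{k=0}^∞ ( Γ((α+k)/2) / k! ) · ( −(1+s)/√t )^k, where the series converges absolutely; equivalently, E[ e^{−sX − tX²} ] = ( t^{α/2} Γ(α) )^{-1} ∫₀^∞ x^{α−1} e^{−x²} e^{−x(1+s)/√t} dx. -/
/-!
Under the Gamma law, `E[e^{-sX-tX²}] = Γ(α)⁻¹ ∫₀^∞ x^{α-1} e^{-(1+s)x - tx²} dx`, and the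
substitution `y = √t x` turns this into `(t^{α/2} Γ(α))⁻¹ ∫₀^∞ y^{α-1} e^{-y²} e^{cy} dy` with
`c = -(1+s)/√t`. Expanding `e^{cy}` in its power series and integrating term by term, which is
justified by domination with `e^{|c|y}` against the Gaussian weight, gives the series, since
`∫₀^∞ y^{α+k-1} e^{-y²} dy = Γ((α+k)/2)/2`.
-/

open MeasureTheory ProbabilityTheory Real
open Set

lemma integral_Ioi_rpow_sub_one_mul_exp_neg_sq {a : ℝ} (ha : 0 < a) :
    ∫ x in Ioi 0, x ^ (a - 1) * exp (-x ^ 2) = Gamma (a / 2) / 2 := by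
  have h := integral_rpow_mul_exp_neg_rpow two_pos (show -1 < a - 1 by linarith)
  rw [sub_add_cancel, one_div_mul_eq_div] at h
  rw [← h]
  refine setIntegral_congr_fun measurableSet_Ioi fun x _ => ?_
  norm_cast

lemma integrableOn_rpow_sub_one_mul_exp_neg_sq_mul_exp {a : ℝ} (ha : 0 < a) (c : ℝ) :
    IntegrableOn (fun x => x ^ (a - 1) * exp (-x ^ 2) * exp (c * x)) (Ioi 0) := by
  have hdom : IntegrableOn (fun x => exp (c ^ 2 / 2) * (x ^ (a - 1) * exp (-(1 / 2) * x ^ 2)))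
      (Ioi 0) :=
    (integrableOn_rpow_mul_exp_neg_mul_sq (by norm_num) (by linarith)).const_mul _
  refine hdom.mono' (by fun_prop) ?_
  filter_upwards [ae_restrict_mem measurableSet_Ioi] with x (hx : 0 < x)
  have hexp : exp (-x ^ 2) * exp (c * x) ≤ exp (c ^ 2 / 2) * exp (-(1 / 2) * x ^ 2) := by
    simp only [← exp_add]
    exact exp_le_exp.mpr (by nlinarith [sq_nonneg (c - x)])
  rw [norm_of_nonneg (by positivity), mul_assoc, mul_left_comm (exp _)]
  exact mul_le_mul_of_nonneg_left hexp (by positivity)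

lemma integral_Ioi_rpow_sub_one_mul_exp_neg_sq_mul_pow {a : ℝ} (ha : 0 < a) (c : ℝ) (k : ℕ) :
    ∫ x in Ioi 0, x ^ (a - 1) * exp (-x ^ 2) * ((c * x) ^ k / k.factorial) =
      c ^ k / k.factorial * (Gamma ((a + k) / 2) / 2) := by
  rw [← integral_Ioi_rpow_sub_one_mul_exp_neg_sq (by positivity : 0 < a + k), ← integral_const_mul]
  refine setIntegral_congr_fun measurableSet_Ioi fun x (hx : 0 < x) => ?_
  rw [show a + k - 1 = (a - 1) + k by ring, rpow_add hx, rpow_natCast, mul_pow]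
  ring

theorem hasSum_integral_Ioi_rpow_sub_one_mul_exp_neg_sq_mul_exp {a : ℝ} (ha : 0 < a) (c : ℝ) :
    HasSum (fun k : ℕ => Gamma ((a + k) / 2) / k.factorial * c ^ k)
      (2 * ∫ x in Ioi 0, x ^ (a - 1) * exp (-x ^ 2) * exp (c * x)) := by
  have hexp : ∀ y : ℝ, HasSum (fun k : ℕ => y ^ k / k.factorial) (exp y) := fun y => by
    simpa [exp_eq_exp_ℝ] using NormedSpace.expSeries_div_hasSum_exp y
  have hterms := hasSum_integral_of_dominated_convergence
    (F := fun (k : ℕ) x => x ^ (a - 1) * exp (-x ^ 2) * ((c * x) ^ k / k.factorial))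
    (f := fun x => x ^ (a - 1) * exp (-x ^ 2) * exp (c * x)) (μ := volume.restrict (Ioi 0))
    (fun k x => x ^ (a - 1) * exp (-x ^ 2) * ((|c| * x) ^ k / k.factorial))
    (fun k => by fun_prop) ?_ ?_ ?_ ?_
  · simp only [integral_Ioi_rpow_sub_one_mul_exp_neg_sq_mul_pow ha] at hterms
    exact (hterms.mul_left 2).congr_fun fun k => by ring
  · intro k
    filter_upwards [ae_restrict_mem measurableSet_Ioi] with x (hx : 0 < x)
    simp [abs_of_pos hx, abs_rpow_of_nonneg hx.le]
  · exact ae_of_all _ fun x => ((hexp _).mul_left _).summable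
  · simp only [((hexp _).mul_left _).tsum_eq]
    exact integrableOn_rpow_sub_one_mul_exp_neg_sq_mul_exp ha |c|
  · exact ae_of_all _ fun x => (hexp _).mul_left _

lemma summable_abs_gamma_div_factorial_mul_pow {a : ℝ} (ha : 0 < a) (c : ℝ) :
    Summable fun k : ℕ => |Gamma ((a + k) / 2) / k.factorial * c ^ k| :=
  (hasSum_integral_Ioi_rpow_sub_one_mul_exp_neg_sq_mul_exp ha |c|).summable.congr fun k => by
    rw [abs_mul, abs_pow, abs_of_pos (by positivity : 0 < Gamma ((a + k) / 2) / k.factorial)]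

lemma integral_gammaMeasure {a r : ℝ} (ha : 0 < a) (hr : 0 < r) (f : ℝ → ℝ) :
    ∫ x, f x ∂gammaMeasure a r =
      r ^ a / Gamma a * ∫ x in Ioi 0, x ^ (a - 1) * exp (-(r * x)) * f x := by
  rw [gammaMeasure, integral_withDensity_eq_integral_toReal_smul (f := gammaPDF a r)
    (measurable_gammaPDFReal a r).ennreal_ofReal (ae_of_all _ fun _ => ENNReal.ofReal_lt_top),
    ← setIntegral_eq_integral_of_forall_compl_eq_zero (s := Ici 0) fun x (hx : ¬0 ≤ x) => by
      simp [gammaPDF, gammaPDFReal, hx],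
    integral_Ici_eq_integral_Ioi, ← integral_const_mul]
  refine setIntegral_congr_fun measurableSet_Ioi fun x (hx : 0 < x) => ?_
  rw [gammaPDF, ENNReal.toReal_ofReal (gammaPDFReal_nonneg ha hr x), gammaPDFReal, if_pos hx.le,
    smul_eq_mul]
  ring

lemma integral_Ioi_rpow_sub_one_mul_comp_mul_left (a : ℝ) {l : ℝ} (hl : 0 < l) (h : ℝ → ℝ) :
    ∫ x in Ioi 0, x ^ (a - 1) * h (l * x) = (l ^ a)⁻¹ * ∫ y in Ioi 0, y ^ (a - 1) * h y := by
  have hsub := integral_comp_mul_left_Ioi (fun y => y ^ (a - 1) * h y) 0 hl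
  have hpull : ∫ x in Ioi 0, (l * x) ^ (a - 1) * h (l * x) =
      l ^ (a - 1) * ∫ x in Ioi 0, x ^ (a - 1) * h (l * x) := by
    rw [← integral_const_mul]
    refine setIntegral_congr_fun measurableSet_Ioi fun x (hx : 0 < x) => ?_
    rw [mul_rpow hl.le hx.le, mul_assoc]
  rw [mul_zero, smul_eq_mul, hpull, rpow_sub_one hl.ne'] at hsub
  field_simp at hsub ⊢
  linarith

lemma integral_exp_neg_mul_sub_mul_sq_gammaMeasure {a t : ℝ} (ha : 0 < a) (ht : 0 < t) (s : ℝ) :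
    ∫ x, exp (-s * x - t * x ^ 2) ∂gammaMeasure a 1 =
      (t ^ (a / 2) * Gamma a)⁻¹ *
        ∫ y in Ioi 0, y ^ (a - 1) * exp (-y ^ 2) * exp (-(1 + s) / √t * y) := by
  have hst : 0 < √t := sqrt_pos.mpr ht
  have hpow : √t ^ a = t ^ (a / 2) := by
    rw [sqrt_eq_rpow, ← rpow_mul ht.le, one_div_mul_eq_div]
  set h : ℝ → ℝ := fun y => exp (-y ^ 2) * exp (-(1 + s) / √t * y)
  calc ∫ x, exp (-s * x - t * x ^ 2) ∂gammaMeasure a 1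
      = (Gamma a)⁻¹ * ∫ x in Ioi 0, x ^ (a - 1) * h (√t * x) := by
        rw [integral_gammaMeasure ha one_pos, one_rpow, one_div]
        congr 1
        refine setIntegral_congr_fun measurableSet_Ioi fun x _ => ?_
        simp only [h, mul_assoc, ← exp_add, mul_pow, sq_sqrt ht.le]
        congr 2
        field_simp
        ring
    _ = (t ^ (a / 2) * Gamma a)⁻¹ * ∫ y in Ioi 0, y ^ (a - 1) * h y := by
        rw [integral_Ioi_rpow_sub_one_mul_comp_mul_left a hst, hpow]
        ring
    _ = _ := by simp only [h, ← mul_assoc]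

theorem stmt_4_general {Ω : Type*} [MeasurableSpace Ω] (μ : Measure Ω)
    (α : ℝ) (hα : 0 < α) (X : Ω → ℝ) (hmeas : Measurable X)
    (hlaw : Measure.map X μ = gammaMeasure α 1)
    (s t : ℝ) (ht : 0 < t) :
    Summable (fun k : ℕ =>
      |Real.Gamma ((α + k) / 2) / k.factorial * (-(1 + s) / Real.sqrt t) ^ k|) ∧
    (∫ ω, Real.exp (-s * X ω - t * (X ω) ^ 2) ∂μ) =
      (2 * t ^ (α / 2) * Real.Gamma α)⁻¹ *
        ∑' k : ℕ, Real.Gamma ((α + k) / 2) / k.factorial * (-(1 + s) / Real.sqrt t) ^ k ∧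
    (∫ ω, Real.exp (-s * X ω - t * (X ω) ^ 2) ∂μ) =
      (t ^ (α / 2) * Real.Gamma α)⁻¹ *
        ∫ x in Set.Ioi (0 : ℝ),
          x ^ (α - 1) * Real.exp (-x ^ 2) * Real.exp (-x * (1 + s) / Real.sqrt t) := by
  set c := -(1 + s) / √t
  simp only [show ∀ x, -x * (1 + s) / √t = c * x from fun x => by ring]
  have hE : ∫ ω, exp (-s * X ω - t * X ω ^ 2) ∂μ =
      (t ^ (α / 2) * Gamma α)⁻¹ * ∫ x in Ioi 0, x ^ (α - 1) * exp (-x ^ 2) * exp (c * x) := by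
    rw [← integral_map (f := fun x => exp (-s * x - t * x ^ 2)) hmeas.aemeasurable (by fun_prop),
      hlaw, integral_exp_neg_mul_sub_mul_sq_gammaMeasure hα ht]
  refine ⟨summable_abs_gamma_div_factorial_mul_pow hα c, ?_, hE⟩
  rw [hE, (hasSum_integral_Ioi_rpow_sub_one_mul_exp_neg_sq_mul_exp hα c).tsum_eq]
  ring

/-- the bivariate Laplace transform of `(X, X²)` for a Gamma(α,1) random
variable `X`: for `t > 0` and `s ≥ 0`,
`E[e^{−sX−tX²}] = (2 t^{α/2} Γ(α))⁻¹ Σ_k (Γ((α+k)/2)/k!) (−(1+s)/√t)^k`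
(with the series converging absolutely), which equals
`(t^{α/2} Γ(α))⁻¹ ∫₀^∞ x^{α−1} e^{−x²} e^{−x(1+s)/√t} dx`. -/
theorem stmt_4 {Ω : Type*} [MeasurableSpace Ω] (μ : Measure Ω) [IsProbabilityMeasure μ]
    (α : ℝ) (hα : 0 < α) (X : Ω → ℝ) (hmeas : Measurable X)
    (hlaw : Measure.map X μ = gammaMeasure α 1)
    (s t : ℝ) (ht : 0 < t) (hs : 0 ≤ s) :
    Summable (fun k : ℕ =>
      |Real.Gamma ((α + k) / 2) / k.factorial * (-(1 + s) / Real.sqrt t) ^ k|) ∧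
    (∫ ω, Real.exp (-s * X ω - t * (X ω) ^ 2) ∂μ) =
      (2 * t ^ (α / 2) * Real.Gamma α)⁻¹ *
        ∑' k : ℕ, Real.Gamma ((α + k) / 2) / k.factorial * (-(1 + s) / Real.sqrt t) ^ k ∧
    (∫ ω, Real.exp (-s * X ω - t * (X ω) ^ 2) ∂μ) =
      (t ^ (α / 2) * Real.Gamma α)⁻¹ *
        ∫ x in Set.Ioi (0 : ℝ),
          x ^ (α - 1) * Real.exp (-x ^ 2) * Real.exp (-x * (1 + s) / Real.sqrt t) :=
  stmt_4_general μ α hα X hmeas hlaw s t ht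
end

section
/- For every real s with s ≥ −αn, E[ (√n U)^s ] = Σ_{k=0}^∞ p_{α,n,k} · (αn+s)_k / (αn)_k, where the series converges. -/
/-!
Almost surely every `Xᵢ` is positive, so by Cauchy–Schwarz `C ∈ [n^{-1/2}, 1]` and `√n U = C⁻¹`.
Writing `C^{-s} = C^{αn} (1 - (1 - C))^{-(αn+s)}` and expanding by the binomial series, whose
terms are dominated by those of the binomial series of `|αn+s|` at `1 - n^{-1/2} < 1`, dominated
convergence integrates the expansion termwise. Expanding `(1 - C)^k` binomially turns the `k`-th
term into `(αn+s)_k / k! · Σⱼ (-1)^j (k choose j) γ_{αn+j} = p_k (αn+s)_k / (αn)_k`.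
-/

open MeasureTheory ProbabilityTheory Real

/-- The Pochhammer symbol `(c)_k = c (c+1) ⋯ (c+k−1)` for a real `c`. -/
noncomputable def poch (c : ℝ) (k : ℕ) : ℝ := ∏ i ∈ Finset.range k, (c + i)

open Set

lemma poch_pos {c : ℝ} (hc : 0 < c) (k : ℕ) : 0 < poch c k :=
  Finset.prod_pos fun _ _ => by positivity

lemma abs_poch_le (c : ℝ) (k : ℕ) : |poch c k| ≤ poch |c| k := by
  rw [poch, Finset.abs_prod]
  exact Finset.prod_le_prod (fun _ _ => abs_nonneg _) fun i _ => by
    simpa using abs_add_le c (i : ℝ)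

lemma ascPochhammer_eval_eq_poch (c : ℝ) (k : ℕ) : (ascPochhammer ℝ k).eval c = poch c k := by
  induction k with
  | zero => simp [poch]
  | succ k ih => rw [ascPochhammer_succ_eval, ih, poch, poch, Finset.prod_range_succ]

lemma ringChoose_eq_poch_div_factorial (c : ℝ) (k : ℕ) :
    Ring.choose (c + k - 1) k = poch c k / k.factorial := by
  rw [Ring.choose_eq_smul, Polynomial.descPochhammer_smeval_eq_ascPochhammer,
    Polynomial.ascPochhammer_smeval_eq_eval, ascPochhammer_eval_eq_poch, smul_eq_mul]
  ring_nf

lemma hasSum_poch_div_factorial_mul_pow (c : ℝ) {t : ℝ} (ht : |t| < 1) :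
    HasSum (fun k => poch c k / k.factorial * t ^ k) ((1 - t) ^ (-c)) := by
  have := (one_div_one_sub_rpow_hasFPowerSeriesOnBall_zero c).hasSum
    (y := t) (by simpa [enorm_eq_nnnorm, ← NNReal.coe_lt_one] using ht)
  rw [Real.rpow_neg (by linarith [le_abs_self t])]
  simpa [FormalMultilinearSeries.ofScalars_apply_eq, ringChoose_eq_poch_div_factorial,
    mul_comm] using this

lemma hasSum_rpow_neg (a s : ℝ) {x : ℝ} (hx : 0 < x) (hx2 : x < 2) :
    HasSum (fun k => poch (a + s) k / k.factorial * ((1 - x) ^ k * x ^ a)) (x ^ (-s)) := by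
  have h := (hasSum_poch_div_factorial_mul_pow (a + s) (t := 1 - x)
    (abs_sub_lt_iff.2 ⟨by linarith, by linarith⟩)).mul_right (x ^ a)
  rw [sub_sub_cancel, ← rpow_add hx, neg_add_rev, neg_add_cancel_right] at h
  simpa only [mul_assoc] using h

lemma one_sub_pow_eq_sum {R : Type*} [CommRing R] (x : R) (k : ℕ) :
    (1 - x) ^ k = ∑ j ∈ Finset.range (k + 1), (-1) ^ j * (k.choose j : R) * x ^ j := by
  rw [sub_eq_neg_add, add_pow]
  refine Finset.sum_congr rfl fun j _ => ?_
  rw [neg_pow, one_pow]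
  ring

section Expansion

variable {Ω : Type*} [MeasurableSpace Ω] {μ : Measure Ω} [IsFiniteMeasure μ] {C : Ω → ℝ}

lemma integrable_rpow_of_ae_mem_Icc (hCm : AEMeasurable C μ) (hC : ∀ᵐ ω ∂μ, C ω ∈ Icc 0 1)
    {m : ℝ} (hm : 0 ≤ m) : Integrable (fun ω => C ω ^ m) μ := by
  refine (integrable_const 1).mono' (hCm.pow_const m).aestronglyMeasurable ?_
  filter_upwards [hC] with ω hω
  rw [norm_of_nonneg (rpow_nonneg hω.1 m)]
  exact rpow_le_one hω.1 hω.2 hm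

lemma integral_one_sub_pow_mul_rpow (hCm : AEMeasurable C μ) (hC : ∀ᵐ ω ∂μ, C ω ∈ Ioc 0 1)
    {a : ℝ} (ha : 0 ≤ a) (k : ℕ) :
    ∫ ω, (1 - C ω) ^ k * C ω ^ a ∂μ
      = ∑ j ∈ Finset.range (k + 1), (-1) ^ j * (k.choose j : ℝ) * ∫ ω, C ω ^ (a + j) ∂μ := by
  have hC' : ∀ᵐ ω ∂μ, C ω ∈ Icc 0 1 := hC.mono fun _ h => Ioc_subset_Icc_self h
  have hexpand : (fun ω => (1 - C ω) ^ k * C ω ^ a) =ᵐ[μ]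
      fun ω => ∑ j ∈ Finset.range (k + 1), (-1) ^ j * (k.choose j : ℝ) * C ω ^ (a + j) := by
    filter_upwards [hC] with ω hω
    simp_rw [one_sub_pow_eq_sum, Finset.sum_mul, rpow_add hω.1, rpow_natCast, mul_comm (C ω ^ a),
      mul_assoc]
  rw [integral_congr_ae hexpand, integral_finsetSum _ fun j _ =>
    (integrable_rpow_of_ae_mem_Icc hCm hC' (by positivity)).const_mul _]
  simp_rw [integral_const_mul]

lemma hasSum_integral_rpow_neg (hCm : AEMeasurable C μ) {b : ℝ} (hb : 0 < b) (hb1 : b ≤ 1)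
    (hC : ∀ᵐ ω ∂μ, C ω ∈ Icc b 1) {a : ℝ} (ha : 0 ≤ a) (s : ℝ) :
    HasSum (fun k => poch (a + s) k / k.factorial * ∫ ω, (1 - C ω) ^ k * C ω ^ a ∂μ)
      (∫ ω, C ω ^ (-s) ∂μ) := by
  simp_rw [← integral_const_mul]
  refine hasSum_integral_of_dominated_convergence
    (fun k _ => poch |a + s| k / k.factorial * (1 - b) ^ k)
    (fun k => (((hCm.const_sub 1).pow_const k).mul (hCm.pow_const a)).const_mul _
      |>.aestronglyMeasurable) (fun k => ?_)
    (ae_of_all _ fun _ => (hasSum_poch_div_factorial_mul_pow _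
      (by rw [abs_lt]; constructor <;> linarith)).summable)
    (integrable_const _) (hC.mono fun ω hω => hasSum_rpow_neg a s (by linarith [hω.1])
      (by linarith [hω.2]))
  filter_upwards [hC] with ω hω
  have hCpos : 0 < C ω := hb.trans_le hω.1
  have h1C : 0 ≤ 1 - C ω := by linarith [hω.2]
  calc ‖poch (a + s) k / k.factorial * ((1 - C ω) ^ k * C ω ^ a)‖
      = |poch (a + s) k| / k.factorial * ((1 - C ω) ^ k * C ω ^ a) := by
        rw [norm_mul, norm_div, Real.norm_natCast, Real.norm_eq_abs,
          norm_of_nonneg (by positivity)]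
    _ ≤ poch |a + s| k / k.factorial * ((1 - b) ^ k * 1) := by
        have habs := abs_poch_le (a + s) k
        have := rpow_le_one hCpos.le hω.2 ha
        gcongr
        · exact div_nonneg ((abs_nonneg _).trans habs) k.factorial.cast_nonneg
        · exact hω.1
    _ = poch |a + s| k / k.factorial * (1 - b) ^ k := by rw [mul_one]

end Expansion

lemma sqrt_sum_sq_le_sum {ι : Type*} (s : Finset ι) {x : ι → ℝ} (hx : ∀ i ∈ s, 0 ≤ x i) :
    √(∑ i ∈ s, x i ^ 2) ≤ ∑ i ∈ s, x i :=
  sqrt_le_iff.2 ⟨Finset.sum_nonneg hx, Finset.sum_sq_le_sq_sum_of_nonneg hx⟩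

lemma sum_le_sqrt_card_mul_sqrt_sum_sq {ι : Type*} (s : Finset ι) (x : ι → ℝ) :
    ∑ i ∈ s, x i ≤ √s.card * √(∑ i ∈ s, x i ^ 2) := by
  rw [← sqrt_mul (Nat.cast_nonneg _)]
  exact le_sqrt_of_sq_le (sq_sum_le_card_mul_sum_sq)

lemma sum_div_sqrt_card_mul_sqrt_sum_sq_mem_Icc {ι : Type*} [Fintype ι] [Nonempty ι]
    {x : ι → ℝ} (hx : ∀ i, 0 < x i) :
    (∑ i, x i) / (√(Fintype.card ι) * √(∑ i, x i ^ 2)) ∈ Icc (√(Fintype.card ι))⁻¹ 1 := by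
  have hR : 0 < √(∑ i, x i ^ 2) :=
    sqrt_pos.2 (Finset.sum_pos (fun i _ => by have := hx i; positivity) Finset.univ_nonempty)
  have hn : 0 < √(Fintype.card ι : ℝ) := sqrt_pos.2 (by exact_mod_cast Fintype.card_pos)
  constructor
  · rw [le_div_iff₀ (by positivity), inv_mul_cancel_left₀ hn.ne']
    exact sqrt_sum_sq_le_sum _ fun i _ => (hx i).le
  · rw [div_le_one (by positivity)]
    exact sum_le_sqrt_card_mul_sqrt_sum_sq _ _

lemma gammaMeasure_Iic_zero (a r : ℝ) : gammaMeasure a r (Iic 0) = 0 := by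
  rw [gammaMeasure, withDensity_apply _ measurableSet_Iic,
    setLIntegral_congr Iio_ae_eq_Iic.symm, lintegral_gammaPDF_of_nonpos le_rfl]

lemma ae_pos_of_map_eq_gammaMeasure {Ω : Type*} [MeasurableSpace Ω] {μ : Measure Ω}
    {X : Ω → ℝ} (hX : AEMeasurable X μ) {a r : ℝ} (hlaw : μ.map X = gammaMeasure a r) :
    ∀ᵐ ω ∂μ, 0 < X ω := by
  refine ae_of_ae_map hX ?_
  rw [hlaw, ae_iff]
  simpa only [not_lt, ← Iic_def] using gammaMeasure_Iic_zero a r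

theorem stmt_7_general {Ω : Type*} [MeasurableSpace Ω] (μ : Measure Ω) [IsProbabilityMeasure μ]
    (α : ℝ) (hα : 0 < α) (n : ℕ) (hn : 2 ≤ n)
    (X : Fin n → Ω → ℝ) (hmeas : ∀ i, Measurable (X i))
    (hlaw : ∀ i, Measure.map (X i) μ = gammaMeasure α 1)
    (Y R U C : Ω → ℝ)
    (hY : ∀ ω, Y ω = ∑ i, X i ω)
    (hR : ∀ ω, R ω = Real.sqrt (∑ i, (X i ω) ^ 2))
    (hU : ∀ ω, U ω = R ω / Y ω)
    (hC : ∀ ω, C ω = Y ω / (Real.sqrt n * R ω))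
    (γ : ℝ → ℝ) (hγ : ∀ m : ℝ, γ m = ∫ ω, (C ω) ^ m ∂μ)
    (p : ℕ → ℝ)
    (hp : ∀ k, p k = poch (α * n) k / k.factorial *
      ∑ j ∈ Finset.range (k + 1), (-1 : ℝ) ^ j * (k.choose j) * γ (α * n + j))
    (s : ℝ) :
    HasSum (fun k : ℕ => p k * poch (α * n + s) k / poch (α * n) k)
      (∫ ω, (Real.sqrt n * U ω) ^ s ∂μ) := by
  have : Nonempty (Fin n) := ⟨⟨0, by omega⟩⟩
  have hαn : 0 < α * n := by positivity
  have hCm : Measurable C := by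
    simp_rw [funext hC, funext hY, funext hR]
    fun_prop
  have hCb : ∀ᵐ ω ∂μ, C ω ∈ Icc (√n)⁻¹ 1 := by
    filter_upwards [ae_all_iff.2 fun i => ae_pos_of_map_eq_gammaMeasure
      (hmeas i).aemeasurable (hlaw i)] with ω hω
    simpa [hC, hY, hR] using sum_div_sqrt_card_mul_sqrt_sum_sq_mem_Icc hω
  have hUC : ∫ ω, (√n * U ω) ^ s ∂μ = ∫ ω, C ω ^ (-s) ∂μ := by
    refine integral_congr_ae (hCb.mono fun ω hω => ?_)
    have hC0 : 0 ≤ C ω := (inv_nonneg.2 (sqrt_nonneg _)).trans hω.1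
    dsimp only
    rw [rpow_neg hC0, ← inv_rpow hC0, hC, hU, inv_div, mul_div_assoc]
  rw [hUC]
  refine (hasSum_integral_rpow_neg hCm.aemeasurable (by positivity)
    (inv_le_one_of_one_le₀ (one_le_sqrt.2 (by exact_mod_cast (by omega : 1 ≤ n)))) hCb
    hαn.le s).congr_fun fun k => ?_
  rw [integral_one_sub_pow_mul_rpow hCm.aemeasurable
    (hCb.mono fun ω hω => ⟨(inv_pos.2 (by positivity)).trans_le hω.1, hω.2⟩) hαn.le, hp]
  simp_rw [← hγ]
  field_simp [(poch_pos hαn k).ne']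

/-- the Mellin transform / mgf of `log(√n U)`:
for every `s ≥ −αn`, `E[(√n U)^s] = Σ_k p_{α,n,k} (αn+s)_k/(αn)_k`,
where the series converges. -/
theorem stmt_7 {Ω : Type*} [MeasurableSpace Ω] (μ : Measure Ω) [IsProbabilityMeasure μ]
    (α : ℝ) (hα : 0 < α) (n : ℕ) (hn : 2 ≤ n)
    (X : Fin n → Ω → ℝ) (hmeas : ∀ i, Measurable (X i))
    (hindep : iIndepFun X μ)
    (hlaw : ∀ i, Measure.map (X i) μ = gammaMeasure α 1)
    (Y R U C : Ω → ℝ)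
    (hY : ∀ ω, Y ω = ∑ i, X i ω)
    (hR : ∀ ω, R ω = Real.sqrt (∑ i, (X i ω) ^ 2))
    (hU : ∀ ω, U ω = R ω / Y ω)
    (hC : ∀ ω, C ω = Y ω / (Real.sqrt n * R ω))
    (γ : ℝ → ℝ) (hγ : ∀ m : ℝ, γ m = ∫ ω, (C ω) ^ m ∂μ)
    (p : ℕ → ℝ)
    (hp : ∀ k, p k = poch (α * n) k / k.factorial *
      ∑ j ∈ Finset.range (k + 1), (-1 : ℝ) ^ j * (k.choose j) * γ (α * n + j))
    (s : ℝ) (hs : -(α * n) ≤ s) :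
    HasSum (fun k : ℕ => p k * poch (α * n + s) k / poch (α * n) k)
      (∫ ω, (Real.sqrt n * U ω) ^ s ∂μ) :=
  stmt_7_general μ α hα n hn X hmeas hlaw Y R U C hY hR hU hC γ hγ p hp s
end
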